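/- For every β ∈ ℤ and all Laurent polynomials h, k ∈ R, the rank-one trace cocycle satisfies the local Mumford formula: c_Lie((0,h)^{(β)}, (0,k)^{(β)}) = (1 − 6β + 6β²) · c_Lie((0,h)^{(1)}, (0,k)^{(1)}), where for h ∈ R the twist (0,h)^{(β)} is the endomorphism of K given by f ↦ h·f′ + β·h′·f. (This is the identity vir_β = (1 − 6β + 6β²)·vir₁, where vir₁ is the standard Virasoro cocycle.) -/

import Mathlib

/-! On the monomial `z^m` the operator `(0,h)^{(β)}` acts by
`z^m ↦ ∑_b h_b (m + β b) z^(m+b-1)`. So the diagonal entry of `T₁^{+−} T₂^{−+}` at `z^m`, `m < 0`,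
only sees pairs of monomials `z^b` of `k` and `z^(2-b)` of `h` with `1 - b ≤ m`, and the cocycle
becomes `∑_b Q_β(b) (k_b h_(2-b) - h_b k_(2-b))`, where `Q_β(b)` sums a quadratic in `m` over
`1 - b ≤ m < 0`. Evaluating with the power sums gives
`Q_β(b) = (1 - 6β + 6β²) (b - 1) b (2 - b) / 6` for `b ≥ 1`, while `Q_β(b) = 0` for `b ≤ 1`. -/

noncomputable section

/-- `K = ℂ((z))`, the field of formal Laurent series over `ℂ`. -/
abbrev K : Type := LaurentSeries ℂ

/-- The formal derivative of a Laurent series. -/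
def fd (f : K) : K :=
  ⟨fun k => ((k + 1 : ℤ) : ℂ) * f.coeff (k + 1), by
    apply Set.IsPWO.mono (f.isPWO_support.image_of_monotone
      (f := fun x => x - 1) (fun _ _ h => sub_le_sub_right h 1))
    intro k hk
    have : f.coeff (k + 1) ≠ 0 := by
      intro h
      simp [Function.mem_support, h] at hk
    exact ⟨k + 1, this, by ring⟩⟩

/-- The projection of `K` onto `K₋` along `K₊` (truncation to negative degrees). -/
def tneg (f : K) : K :=
  ⟨fun k => if k < 0 then f.coeff k else 0, by
    refine f.isPWO_support.mono (fun k hk => ?_)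
    simp only [Function.mem_support] at hk ⊢
    by_cases h : k < 0
    · simpa [h] using hk
    · simp [h] at hk⟩

/-- The projection of `K` onto `K₊` along `K₋` (truncation to non-negative degrees). -/
def tpos (f : K) : K :=
  ⟨fun k => if 0 ≤ k then f.coeff k else 0, by
    refine f.isPWO_support.mono (fun k hk => ?_)
    simp only [Function.mem_support] at hk ⊢
    by_cases h : (0:ℤ) ≤ k
    · simpa [h] using hk
    · simp [h] at hk⟩

/-- The trace cocycle `c_Lie(T₁, T₂) = Tr(T₁^{+−} T₂^{−+} − T₂^{+−} T₁^{−+} : K₋ → K₋)`,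
computed as the finitely supported sum of the diagonal coefficients in the basis
`{z^m : m < 0}` of `K₋`. -/
def cLieK (T₁ T₂ : K → K) : ℂ :=
  ∑ᶠ (m : ℤ) (_ : m < 0),
    ((tneg (T₁ (tpos (T₂ (tneg (HahnSeries.single m 1)))))
      - tneg (T₂ (tpos (T₁ (tneg (HahnSeries.single m 1)))))).coeff m)

open LaurentPolynomial

/-- The ring `R = ℂ[z, z⁻¹]` of Laurent polynomials. -/
abbrev Rl : Type := LaurentPolynomial ℂ

/-- The inclusion `R = ℂ[z, z⁻¹] ⊆ K`. -/
def toK (f : Rl) : K :=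
  ⟨fun k => f.coeff k, by
    refine (f.coeff.support.finite_toSet.isPWO).mono (fun k hk => ?_)
    simpa [Finsupp.mem_support_iff] using hk⟩

/-- The `β`-twisted operator `(0,h)^{(β)} : f ↦ h·f′ + β·h′·f` on `K`. -/
def Lop (β : ℤ) (h : Rl) : K → K :=
  fun f => toK h * fd f + β • (fd (toK h) * f)

@[simp] lemma coeff_fd (f : K) (t : ℤ) : (fd f).coeff t = ((t + 1 : ℤ) : ℂ) * f.coeff (t + 1) :=
  rfl

@[simp] lemma coeff_tneg (f : K) (t : ℤ) : (tneg f).coeff t = if t < 0 then f.coeff t else 0 :=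
  rfl

@[simp] lemma coeff_tpos (f : K) (t : ℤ) : (tpos f).coeff t = if 0 ≤ t then f.coeff t else 0 :=
  rfl

@[simp] lemma coeff_toK (f : Rl) (t : ℤ) : (toK f).coeff t = f.coeff t :=
  rfl

lemma fd_add (x y : K) : fd (x + y) = fd x + fd y := by
  ext t
  simp only [coeff_fd, HahnSeries.coeff_add]
  ring

lemma tpos_add (x y : K) : tpos (x + y) = tpos x + tpos y := by
  ext t
  simp only [coeff_tpos, HahnSeries.coeff_add]
  split_ifs <;> simp

lemma Lop_add (β : ℤ) (h : Rl) (x y : K) : Lop β h (x + y) = Lop β h x + Lop β h y := by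
  simp only [Lop, fd_add, zsmul_eq_mul]
  ring

lemma tpos_sum {ι : Type*} (s : Finset ι) (f : ι → K) : tpos (∑ i ∈ s, f i) = ∑ i ∈ s, tpos (f i) :=
  map_sum (AddMonoidHom.mk' tpos tpos_add) f s

lemma Lop_sum (β : ℤ) (h : Rl) {ι : Type*} (s : Finset ι) (f : ι → K) :
    Lop β h (∑ i ∈ s, f i) = ∑ i ∈ s, Lop β h (f i) :=
  map_sum (AddMonoidHom.mk' (Lop β h) (Lop_add β h)) f s

lemma fd_single (m : ℤ) (c : ℂ) :
    fd (HahnSeries.single m c) = HahnSeries.single (m - 1) ((m : ℂ) * c) := by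
  ext t
  rcases eq_or_ne t (m - 1) with rfl | ht
  · simp
  · simp [ht, show t + 1 ≠ m by omega]

lemma tpos_single (m : ℤ) (c : ℂ) :
    tpos (HahnSeries.single m c) = HahnSeries.single m (if 0 ≤ m then c else 0) := by
  ext t
  rcases eq_or_ne t m with rfl | ht
  · simp
  · simp [ht]

lemma tneg_single_of_neg {m : ℤ} (hm : m < 0) (c : ℂ) :
    tneg (HahnSeries.single m c) = HahnSeries.single m c := by
  ext t
  rcases eq_or_ne t m with rfl | ht
  · simp [hm]
  · simp [ht]

section Monomials

variable (β : ℤ) (h : Rl)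

lemma coeff_Lop_single (m : ℤ) (c : ℂ) (t : ℤ) :
    (Lop β h (HahnSeries.single m c)).coeff t
      = ((m : ℂ) + β * ((t - m + 1 : ℤ) : ℂ)) * (h.coeff (t - m + 1) * c) := by
  have hfirst : (toK h * fd (HahnSeries.single m c)).coeff t
      = h.coeff (t - m + 1) * ((m : ℂ) * c) := by
    rw [fd_single, ← sub_add_cancel t (m - 1), HahnSeries.coeff_mul_single_add, coeff_toK]
    ring_nf
  have hsecond : (fd (toK h) * HahnSeries.single m c).coeff t
      = ((t - m + 1 : ℤ) : ℂ) * h.coeff (t - m + 1) * c := by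
    rw [← sub_add_cancel t m, HahnSeries.coeff_mul_single_add, coeff_fd, coeff_toK]
    ring_nf
  rw [Lop, HahnSeries.coeff_add, HahnSeries.coeff_smul, hfirst, hsecond, zsmul_eq_mul]
  ring

lemma Lop_single_eq_sum {s : Finset ℤ} (hs : h.coeff.support ⊆ s) (m : ℤ) (c : ℂ) :
    Lop β h (HahnSeries.single m c)
      = ∑ b ∈ s, HahnSeries.single (m + b - 1) (((m : ℂ) + β * b) * (h.coeff b * c)) := by
  ext t
  rw [coeff_Lop_single, HahnSeries.coeff_sum, Finset.sum_eq_single (t - m + 1)]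
  · rw [show m + (t - m + 1) - 1 = t by ring, HahnSeries.coeff_single_same]
  · intro b _ hb
    rw [HahnSeries.coeff_single_of_ne (by omega)]
  · intro hb
    rw [Finsupp.notMem_support_iff.mp (fun hmem => hb (hs hmem))]
    simp

end Monomials

/-- The factor picked up along `z^m ↦ z^(m+b-1) ↦ z^m` when the operator applied first uses its
monomial `z^b` and the other one its monomial `z^(2-b)`. -/
def loopWeight (β b m : ℤ) : ℂ :=
  ((m : ℂ) + β * b) * ((m : ℂ) + b - 1 + β * (2 - b))

lemma coeff_tneg_Lop_tpos_Lop_single (β : ℤ) (h k : Rl) {s : Finset ℤ}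
    (hs : k.coeff.support ⊆ s) {m : ℤ} (hm : m < 0) :
    (tneg (Lop β h (tpos (Lop β k (tneg (HahnSeries.single m 1)))))).coeff m
      = ∑ b ∈ s, (if 1 - b ≤ m then loopWeight β b m else 0) * (k.coeff b * h.coeff (2 - b)) := by
  rw [tneg_single_of_neg hm, Lop_single_eq_sum β k hs, tpos_sum, Lop_sum, coeff_tneg, if_pos hm,
    HahnSeries.coeff_sum]
  refine Finset.sum_congr rfl fun b _ => ?_
  rw [tpos_single, coeff_Lop_single, show m - (m + b - 1) + 1 = 2 - b by ring, loopWeight]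
  rcases le_or_gt (1 - b) m with hle | hlt
  · rw [if_pos (by omega), if_pos hle]
    push_cast
    ring
  · rw [if_neg (by omega), if_neg (by omega)]
    simp

lemma finsum_lt_zero_sum_ite_le {M ι : Type*} [AddCommMonoid M] (s : Finset ι) (lo : ι → ℤ)
    (g : ι → ℤ → M) :
    ∑ᶠ (m : ℤ) (_ : m < 0), ∑ i ∈ s, (if lo i ≤ m then g i m else 0)
      = ∑ i ∈ s, ∑ m ∈ Finset.Ico (lo i) 0, g i m := by
  have hsupp : ∀ i, Function.support (fun m => if m ∈ Finset.Ico (lo i) 0 then g i m else 0)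
      ⊆ Finset.Ico (lo i) 0 :=
    fun i => Function.support_subset_iff'.mpr fun m hm => if_neg hm
  calc ∑ᶠ (m : ℤ) (_ : m < 0), ∑ i ∈ s, (if lo i ≤ m then g i m else 0)
      = ∑ᶠ m : ℤ, ∑ i ∈ s, (if m ∈ Finset.Ico (lo i) 0 then g i m else 0) := by
        refine finsum_congr fun m => ?_
        rw [finsum_eq_if]
        by_cases hm : m < 0 <;> simp [hm]
    _ = ∑ i ∈ s, ∑ᶠ m : ℤ, (if m ∈ Finset.Ico (lo i) 0 then g i m else 0) :=
        finsum_sum_comm s _ fun i _ => (Finset.finite_toSet _).subset (hsupp i)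
    _ = ∑ i ∈ s, ∑ m ∈ Finset.Ico (lo i) 0, g i m := by
        refine Finset.sum_congr rfl fun i _ => ?_
        rw [finsum_eq_sum_of_support_subset _ (hsupp i)]
        exact Finset.sum_congr rfl fun m hm => if_pos hm

def loopWeightSum (β b : ℤ) : ℂ :=
  ∑ m ∈ Finset.Ico (1 - b) 0, loopWeight β b m

lemma cLieK_Lop_eq_sum (β : ℤ) (h k : Rl) {s : Finset ℤ} (hh : h.coeff.support ⊆ s)
    (hk : k.coeff.support ⊆ s) :
    cLieK (Lop β h) (Lop β k) = ∑ b ∈ s, loopWeightSum β b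
      * (k.coeff b * h.coeff (2 - b) - h.coeff b * k.coeff (2 - b)) := by
  calc cLieK (Lop β h) (Lop β k)
      = ∑ᶠ (m : ℤ) (_ : m < 0), ∑ b ∈ s, (if 1 - b ≤ m then loopWeight β b m
          * (k.coeff b * h.coeff (2 - b) - h.coeff b * k.coeff (2 - b)) else 0) := by
        refine finsum_congr fun m => finsum_congr fun hm => ?_
        rw [HahnSeries.coeff_sub, coeff_tneg_Lop_tpos_Lop_single β h k hk hm,
          coeff_tneg_Lop_tpos_Lop_single β k h hh hm, ← Finset.sum_sub_distrib]
        refine Finset.sum_congr rfl fun b _ => ?_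
        split_ifs <;> ring
    _ = _ := by
        simp only [finsum_lt_zero_sum_ite_le, loopWeightSum, Finset.sum_mul]

lemma sum_Ico_neg_natCast_mul (A B : ℂ) (n : ℕ) :
    ∑ m ∈ Finset.Ico (-(n : ℤ)) 0, ((m : ℂ) + A) * ((m : ℂ) + B)
      = n * (n + 1) * (2 * n + 1) / 6 - (A + B) * (n * (n + 1) / 2) + n * A * B := by
  induction n with
  | zero => simp
  | succ n ih =>
    have hIco : Finset.Ico (-((n + 1 : ℕ) : ℤ)) 0
        = insert (-(n : ℤ) - 1) (Finset.Ico (-(n : ℤ)) 0) := by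
      ext x
      simp only [Finset.mem_Ico, Finset.mem_insert]
      omega
    rw [hIco, Finset.sum_insert (by simp), ih]
    push_cast
    ring

lemma loopWeightSum_natCast_add_one (β : ℤ) (n : ℕ) :
    loopWeightSum β (n + 1)
      = (1 - 6 * (β : ℂ) + 6 * (β : ℂ) ^ 2) * (n * (n + 1) * (1 - n) / 6) := by
  have hweight : ∀ m : ℤ, loopWeight β (n + 1) m
      = ((m : ℂ) + β * (n + 1)) * ((m : ℂ) + (n + β * (1 - n))) := by
    intro m
    rw [loopWeight]
    push_cast
    ring
  rw [loopWeightSum, show 1 - ((n : ℤ) + 1) = -(n : ℤ) by ring,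
    Finset.sum_congr rfl fun m _ => hweight m, sum_Ico_neg_natCast_mul]
  ring

lemma loopWeightSum_of_le_one (β : ℤ) {b : ℤ} (hb : b ≤ 1) : loopWeightSum β b = 0 := by
  rw [loopWeightSum, Finset.Ico_eq_empty (by omega), Finset.sum_empty]

lemma loopWeightSum_eq_mul_loopWeightSum_one (β b : ℤ) :
    loopWeightSum β b = (1 - 6 * (β : ℂ) + 6 * (β : ℂ) ^ 2) * loopWeightSum 1 b := by
  rcases le_or_gt b 1 with hb | hb
  · simp [loopWeightSum_of_le_one _ hb]
  · obtain ⟨n, rfl⟩ : ∃ n : ℕ, b = n + 1 := ⟨(b - 1).toNat, by omega⟩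
    rw [loopWeightSum_natCast_add_one, loopWeightSum_natCast_add_one]
    ring

/-- The local Mumford formula `vir_β = (1 − 6β + 6β²) · vir₁` for the rank-one trace
cocycle on the `β`-twisted vector-field operators. -/
theorem local_mumford_formula (β : ℤ) (h k : Rl) :
    cLieK (Lop β h) (Lop β k) =
      (1 - 6 * (β : ℂ) + 6 * (β : ℂ) ^ 2) * cLieK (Lop 1 h) (Lop 1 k) := by
  rw [cLieK_Lop_eq_sum β h k Finset.subset_union_left Finset.subset_union_right,
    cLieK_Lop_eq_sum 1 h k Finset.subset_union_left Finset.subset_union_right, Finset.mul_sum]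
  refine Finset.sum_congr rfl fun b _ => ?_
  rw [loopWeightSum_eq_mul_loopWeightSum_one β b]
  ring

end
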